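/- arXiv:2109.05203 — 8 statements merged into one kernel-verified Lean document; each statement's English description precedes it below -/
import Mathlib

section
/- For every α ∈ [1,2] and every s ≥ 0, one has (1+s)·e^{-αs} - 1 ≥ -e^{α-2}·s. -/
/-! The claim says `f s ≥ f 0` for `f s = (1 + s) e^{-αs} + e^{α-2} s`. In fact `f` is
nondecreasing on all of `ℝ`: its derivative `e^{α-2} - (α(1 + s) - 1) e^{-αs}`
is nonnegative because `e^{α(1+s)-2} ≥ α(1 + s) - 1`, an instance of `e^t ≥ t + 1`. -/

open Real

theorem mul_exp_neg_mul_le_exp_sub_two (a x : ℝ) :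
    (a * (1 + x) - 1) * exp (-a * x) ≤ exp (a - 2) := by
  calc (a * (1 + x) - 1) * exp (-a * x)
      ≤ exp (a * (1 + x) - 2) * exp (-a * x) := by
        gcongr
        linarith [add_one_le_exp (a * (1 + x) - 2)]
    _ = exp (a - 2) := by rw [← exp_add]; ring_nf

theorem hasDerivAt_one_add_mul_exp_neg_mul (a x : ℝ) :
    HasDerivAt (fun x => (1 + x) * exp (-a * x)) (exp (-a * x) * (1 - a * (1 + x))) x := by
  have hlin : HasDerivAt (fun x : ℝ => -a * x) (-a) x := by
    simpa using (hasDerivAt_id x).const_mul (-a)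
  exact (((hasDerivAt_id' x).const_add 1).mul hlin.exp).congr_deriv (by ring)

theorem monotone_one_add_mul_exp_neg_mul_add (a : ℝ) :
    Monotone (fun x => (1 + x) * exp (-a * x) + exp (a - 2) * x) := by
  refine monotone_of_hasDerivAt_nonneg
    (fun x => (hasDerivAt_one_add_mul_exp_neg_mul a x).add
      ((hasDerivAt_id x).const_mul (exp (a - 2)))) fun x => ?_
  simp only [Pi.zero_apply, mul_one]
  linarith [mul_exp_neg_mul_le_exp_sub_two a x]

theorem stmt_0_general (α : ℝ) (s : ℝ) (hs : 0 ≤ s) :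
    (1 + s) * Real.exp (-α * s) - 1 ≥ -Real.exp (α - 2) * s := by
  have h := monotone_one_add_mul_exp_neg_mul_add α hs
  simp only [mul_zero, exp_zero, mul_one, add_zero] at h
  linarith

theorem stmt_0 (α : ℝ) (hα : α ∈ Set.Icc (1:ℝ) 2) (s : ℝ) (hs : 0 ≤ s) :
    (1 + s) * Real.exp (-α * s) - 1 ≥ -Real.exp (α - 2) * s :=
  stmt_0_general α s hs
end

section
/- For every α ∈ [1,2] and every s > 0, one has |((1+s)·e^{-αs} - 1)/s| ≤ e^{α-2}. In particular, sup_{s>0} |((1+s)e^{-αs}-1)/s| ≤ e^{α-2}. -/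
/-!
For `α ≥ 1` the numerator `(1 + s) e^{-αs} - 1` is nonpositive, since `1 + s ≤ e^s ≤ e^{αs}`.
It remains to show `1 ≤ s e^{α-2} + (1 + s) e^{-αs}`. The right-hand side equals `1` at `s = 0`,
and its derivative `e^{α-2} - (α(1 + s) - 1) e^{-αs}` is nonnegative because
`α(1 + s) - 1 ≤ e^{α(1 + s) - 2}`, which is `y + 1 ≤ e^y`.
-/

open Real

lemma one_add_mul_exp_neg_mul_le_one {α s : ℝ} (hα : 1 ≤ α) (hs : 0 ≤ s) :
    (1 + s) * exp (-α * s) ≤ 1 := by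
  rw [neg_mul, exp_neg, ← div_eq_mul_inv, div_le_one (exp_pos _)]
  calc 1 + s ≤ exp s := by linarith [add_one_le_exp s]
    _ ≤ exp (α * s) := exp_le_exp.mpr (by nlinarith)

lemma hasDerivAt_mul_exp_add_one_add_mul_exp_neg_mul (α x : ℝ) :
    HasDerivAt (fun x => x * exp (α - 2) + (1 + x) * exp (-α * x))
      (exp (α - 2) - (α * (1 + x) - 1) * exp (-α * x)) x := by
  have hexp : HasDerivAt (fun x => exp (-α * x)) (exp (-α * x) * -α) x := by
    simpa using ((hasDerivAt_id x).const_mul (-α)).exp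
  exact (((hasDerivAt_id x).mul_const (exp (α - 2))).add
    (((hasDerivAt_id x).const_add 1).mul hexp)).congr_deriv (by simp only [id]; ring)

lemma mul_one_add_sub_one_mul_exp_neg_mul_le (α x : ℝ) :
    (α * (1 + x) - 1) * exp (-α * x) ≤ exp (α - 2) := by
  have h : α * (1 + x) - 1 ≤ exp (α * (1 + x) - 2) := by
    linarith [add_one_le_exp (α * (1 + x) - 2)]
  calc (α * (1 + x) - 1) * exp (-α * x)
      ≤ exp (α * (1 + x) - 2) * exp (-α * x) := mul_le_mul_of_nonneg_right h (exp_pos _).le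
    _ = exp (α - 2) := by rw [← exp_add]; ring_nf

lemma one_le_mul_exp_add_one_add_mul_exp_neg_mul (α : ℝ) {s : ℝ} (hs : 0 ≤ s) :
    1 ≤ s * exp (α - 2) + (1 + s) * exp (-α * s) := by
  have hmono : Monotone fun x => x * exp (α - 2) + (1 + x) * exp (-α * x) :=
    monotone_of_deriv_nonneg
      (fun x => (hasDerivAt_mul_exp_add_one_add_mul_exp_neg_mul α x).differentiableAt)
      fun x => by
        rw [(hasDerivAt_mul_exp_add_one_add_mul_exp_neg_mul α x).deriv, sub_nonneg]
        exact mul_one_add_sub_one_mul_exp_neg_mul_le α x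
  simpa using hmono hs

theorem stmt_1 (α : ℝ) (hα : α ∈ Set.Icc (1:ℝ) 2) (s : ℝ) (hs : 0 < s) :
    |((1 + s) * Real.exp (-α * s) - 1) / s| ≤ Real.exp (α - 2) := by
  have hnonpos : (1 + s) * exp (-α * s) - 1 ≤ 0 :=
    sub_nonpos.mpr (one_add_mul_exp_neg_mul_le_one hα.1 hs.le)
  rw [abs_div, abs_of_pos hs, abs_of_nonpos hnonpos, div_le_iff₀ hs]
  linarith [one_le_mul_exp_add_one_add_mul_exp_neg_mul α hs.le]
end

section
/- For every α ∈ [0,1) and every s > 0, one has |((1+s)·e^{-αs} - 1)/s| ≤ max(e^{α-2}, 1-α). -/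
/-!
Write `g(s) = (1 + s) e^{-αs}`, so the quantity is `(g(s) - g(0)) / s`. From above, `e^{αs} ≥ 1 + αs`
gives `g(s) ≤ (1 + s) / (1 + αs) ≤ 1 + (1 - α) s`. From below, `g'(s) = e^{-αs} (1 - α - αs)` and
`t e^{-t} ≤ e^{-1}` with `t = αs + α - 1` give `g' ≥ -e^{α-2}`, so `g(s) ≥ 1 - e^{α-2} s`.
-/

open Real

namespace Real

theorem hasDerivAt_one_add_mul_exp_neg_mul (α x : ℝ) :
    HasDerivAt (fun s => (1 + s) * exp (-α * s)) (exp (-α * x) * (1 - α - α * x)) x := by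
  have hexp : HasDerivAt (fun s => exp (-α * s)) (exp (-α * x) * -α) x :=
    ((hasDerivAt_id x).const_mul (-α)).exp.congr_deriv (by simp)
  exact (((hasDerivAt_id x).const_add 1).mul hexp).congr_deriv (by simp; ring)

theorem exp_neg_mul_mul_le_exp_sub_two (α x : ℝ) :
    exp (-α * x) * (α * x + α - 1) ≤ exp (α - 2) :=
  calc exp (-α * x) * (α * x + α - 1)
      ≤ exp (-α * x) * exp (α * x + α - 2) := by
        gcongr
        linarith [add_one_le_exp (α * x + α - 2)]
    _ = exp (α - 2) := by rw [← exp_add]; ring_nf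

theorem one_sub_exp_sub_two_mul_le (α : ℝ) {s : ℝ} (hs : 0 ≤ s) :
    1 - exp (α - 2) * s ≤ (1 + s) * exp (-α * s) := by
  have hmono : Monotone fun s => (1 + s) * exp (-α * s) + exp (α - 2) * s := by
    refine monotone_of_hasDerivAt_nonneg
      (fun x => (hasDerivAt_one_add_mul_exp_neg_mul α x).add
        ((hasDerivAt_id x).const_mul (exp (α - 2)))) fun x => ?_
    have := exp_neg_mul_mul_le_exp_sub_two α x
    simp only [Pi.zero_apply, mul_one]
    linarith
  have := hmono hs
  simp only [mul_zero, exp_zero, mul_one, add_zero] at this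
  linarith

theorem one_add_mul_exp_neg_mul_le {α s : ℝ} (hα₀ : 0 ≤ α) (hα₁ : α ≤ 1) (hs : 0 ≤ s) :
    (1 + s) * exp (-α * s) ≤ 1 + (1 - α) * s := by
  have hpos : 0 < 1 + α * s := by positivity
  have hexp : exp (-α * s) ≤ (1 + α * s)⁻¹ := by
    rw [neg_mul, exp_neg]
    exact inv_anti₀ hpos (by linarith [add_one_le_exp (α * s)])
  calc (1 + s) * exp (-α * s) ≤ (1 + s) * (1 + α * s)⁻¹ := by gcongr
    _ ≤ 1 + (1 - α) * s := by
      rw [← div_eq_mul_inv, div_le_iff₀ hpos]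
      nlinarith [mul_nonneg (mul_nonneg hα₀ (sq_nonneg s)) (sub_nonneg.2 hα₁)]

end Real

theorem stmt_2 (α : ℝ) (hα : α ∈ Set.Ico (0:ℝ) 1) (s : ℝ) (hs : 0 < s) :
    |((1 + s) * Real.exp (-α * s) - 1) / s| ≤ max (Real.exp (α - 2)) (1 - α) := by
  obtain ⟨hα₀, hα₁⟩ := hα
  have hlower := one_sub_exp_sub_two_mul_le α hs.le
  have hupper := one_add_mul_exp_neg_mul_le hα₀ hα₁.le hs.le
  have hleft : exp (α - 2) * s ≤ max (exp (α - 2)) (1 - α) * s := by gcongr; exact le_max_left _ _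
  have hright : (1 - α) * s ≤ max (exp (α - 2)) (1 - α) * s := by gcongr; exact le_max_right _ _
  rw [abs_div, abs_of_pos hs, div_le_iff₀ hs, abs_le]
  constructor <;> linarith
end

section
/- The function g(s) = (1+s)e^{-αs} + e^{α-2}s is nondecreasing on [0,∞) for every α ∈ [1,2], because its derivative g'(s) = (1-α-αs)e^{-αs} + e^{α-2} is nonnegative on [0,∞), attaining its minimum value 0 at s = (2-α)/α. -/
open Real

/-! With `t = α s + α - 1` one has `g'(s) = e^{α-2} (1 - t e^{1-t})`, and `t e^{1-t} ≤ 1` is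
`t ≤ e^{t-1}`, i.e. `1 + x ≤ e^x`. Hence `g' ≥ 0` on all of `ℝ`, with equality at `t = 1`,
that is at `s = (2 - α)/α`. -/

theorem mul_exp_one_sub_le_one (t : ℝ) : t * exp (1 - t) ≤ 1 := by
  have h : t ≤ exp (t - 1) := by linarith [add_one_le_exp (t - 1)]
  calc t * exp (1 - t) ≤ exp (t - 1) * exp (1 - t) := by gcongr
    _ = 1 := by rw [← exp_add, sub_add_sub_cancel', sub_self, exp_zero]

noncomputable def g (α s : ℝ) : ℝ := (1 + s) * exp (-α * s) + exp (α - 2) * s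

noncomputable def g' (α s : ℝ) : ℝ := (1 - α - α * s) * exp (-α * s) + exp (α - 2)

theorem hasDerivAt_g (α s : ℝ) : HasDerivAt (g α) (g' α s) s := by
  have hexp : HasDerivAt (fun s => exp (-α * s)) (exp (-α * s) * -α) s := by
    simpa using ((hasDerivAt_id s).const_mul (-α)).exp
  have hlin : HasDerivAt (fun s => 1 + s) 1 s := (hasDerivAt_id s).const_add 1
  refine ((hlin.mul hexp).add ((hasDerivAt_id' s).const_mul (exp (α - 2)))).congr_deriv ?_
  rw [g']
  ring

theorem g'_eq (α s : ℝ) :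
    g' α s = exp (α - 2) * (1 - (α * s + α - 1) * exp (1 - (α * s + α - 1))) := by
  have h : exp (-α * s) = exp (1 - (α * s + α - 1)) * exp (α - 2) := by
    rw [← exp_add]; ring_nf
  rw [g', h]
  ring

theorem g'_nonneg (α s : ℝ) : 0 ≤ g' α s := by
  rw [g'_eq]
  exact mul_nonneg (exp_pos _).le (sub_nonneg.2 (mul_exp_one_sub_le_one _))

theorem monotone_g (α : ℝ) : Monotone (g α) :=
  monotone_of_deriv_nonneg (fun s => (hasDerivAt_g α s).differentiableAt)
    fun s => (hasDerivAt_g α s).deriv ▸ g'_nonneg α s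

theorem g'_div_eq_zero {α : ℝ} (hα : α ≠ 0) : g' α ((2 - α) / α) = 0 := by
  rw [g'_eq, mul_div_cancel₀ _ hα]
  norm_num

theorem stmt_4 (α : ℝ) (hα : α ∈ Set.Icc (1:ℝ) 2) :
    MonotoneOn (fun s : ℝ => (1 + s) * Real.exp (-α * s) + Real.exp (α - 2) * s)
      (Set.Ici 0) ∧
    (∀ s ∈ Set.Ici (0:ℝ),
      HasDerivAt (fun s : ℝ => (1 + s) * Real.exp (-α * s) + Real.exp (α - 2) * s)
        ((1 - α - α * s) * Real.exp (-α * s) + Real.exp (α - 2)) s) ∧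
    (∀ s ∈ Set.Ici (0:ℝ),
      0 ≤ (1 - α - α * s) * Real.exp (-α * s) + Real.exp (α - 2)) ∧
    (1 - α - α * ((2 - α) / α)) * Real.exp (-α * ((2 - α) / α)) + Real.exp (α - 2) = 0 :=
  ⟨(monotone_g α).monotoneOn _, fun s _ => hasDerivAt_g α s, fun s _ => g'_nonneg α s,
    g'_div_eq_zero (by linarith [hα.1])⟩
end

section
/- The function ψ(s) = (1 - (1+s)e^{-s})/s is nonnegative on (0,∞), and its derivative ψ'(s) = (1 - (1 + s + s²)e^{-s})/s² has exactly one zero s* in (0,∞); moreover s* ∈ (1.7, 1.9) and ψ(s*) < 0.3. Consequently sup_{s>0} |((1+s)e^{-s}-1)/s| < 0.3. -/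
/-!
Write `φ(s) = (1 + s + s²) e^{-s}`, so that `ψ'(s) = (φ(s) - 1) / s²`. Since
`φ'(s) = s (1 - s) e^{-s}`, `φ` increases from `φ(0) = 1` on `[0, 1]` and then decreases strictly,
so `φ = 1` at exactly one `s* > 0`, and `ψ` increases before `s*` and decreases after it.
At `s*` we have `e^{-s*} = 1 / (1 + s* + s*²)`, hence `ψ(s*) = s* / (1 + s* + s*²)`, which is below
`0.3` as soon as `3 s*² - 7 s* + 3 > 0`, i.e. for `s* > (7 + √13) / 6 ≈ 1.768`. Bounds on `e^{1.78}`
and `e^{1.9}` place `s*` in `[1.78, 1.9)`.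
-/

open Real Set

namespace Parareal

noncomputable def psi (s : ℝ) : ℝ := (1 - (1 + s) * exp (-s)) / s

noncomputable def phi (s : ℝ) : ℝ := (1 + s + s ^ 2) * exp (-s)

lemma psi_nonneg {s : ℝ} (hs : 0 ≤ s) : 0 ≤ psi s := by
  have h : (1 + s) * exp (-s) ≤ 1 := by
    calc (1 + s) * exp (-s) ≤ exp s * exp (-s) := by
          gcongr; linarith [add_one_le_exp s]
      _ = 1 := by rw [← exp_add, add_neg_cancel, exp_zero]
  exact div_nonneg (by linarith) hs

lemma continuous_phi : Continuous phi := by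
  unfold phi; fun_prop

lemma hasDerivAt_phi (x : ℝ) : HasDerivAt phi (x * (1 - x) * exp (-x)) x := by
  have hpoly : HasDerivAt (fun s : ℝ => 1 + s + s ^ 2) (1 + 2 * x) x := by
    exact (((hasDerivAt_id x).const_add 1).add (hasDerivAt_pow 2 x)).congr_deriv (by
      push_cast; ring)
  exact (hpoly.mul (hasDerivAt_neg x).exp).congr_deriv (by ring)

lemma hasDerivAt_psi {x : ℝ} (hx : x ≠ 0) : HasDerivAt psi ((phi x - 1) / x ^ 2) x := by
  have hnum : HasDerivAt (fun s : ℝ => 1 - (1 + s) * exp (-s)) (x * exp (-x)) x := by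
    have hlin : HasDerivAt (fun s : ℝ => 1 + s) 1 x := by
      simpa using (hasDerivAt_id x).const_add 1
    exact ((hlin.mul (hasDerivAt_neg x).exp).const_sub 1).congr_deriv (by ring)
  refine (hnum.div (hasDerivAt_id x) hx).congr_deriv ?_
  simp only [phi, id]
  field_simp
  ring

lemma continuousOn_psi {D : Set ℝ} (hD : D ⊆ Ioi 0) : ContinuousOn psi D := fun _ hx =>
  (hasDerivAt_psi (hD hx).ne').continuousAt.continuousWithinAt

lemma strictMonoOn_phi : StrictMonoOn phi (Icc 0 1) := by
  refine strictMonoOn_of_deriv_pos (convex_Icc 0 1) continuous_phi.continuousOn fun x hx => ?_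
  rw [interior_Icc] at hx
  rw [(hasDerivAt_phi x).deriv]
  have : 0 < x * (1 - x) := mul_pos hx.1 (by linarith [hx.2])
  positivity

lemma strictAntiOn_phi : StrictAntiOn phi (Ici 1) := by
  refine strictAntiOn_of_deriv_neg (convex_Ici 1) continuous_phi.continuousOn fun x hx => ?_
  rw [interior_Ici] at hx
  rw [(hasDerivAt_phi x).deriv]
  have hx1 : (1 : ℝ) < x := hx
  exact mul_neg_of_neg_of_pos (mul_neg_of_pos_of_neg (by linarith) (by linarith)) (exp_pos _)

lemma one_lt_phi {x : ℝ} (hx : 0 < x) (hx1 : x ≤ 1) : 1 < phi x := by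
  simpa [phi] using strictMonoOn_phi (left_mem_Icc.2 zero_le_one) ⟨hx.le, hx1⟩ hx

lemma one_le_of_phi_eq_one {s : ℝ} (hs : 0 < s) (h : phi s = 1) : 1 ≤ s := by
  by_contra! hs1
  exact (one_lt_phi hs hs1.le).ne' h

lemma eq_of_phi_eq_one {s t : ℝ} (hs : 0 < s) (ht : 0 < t) (hφs : phi s = 1)
    (hφt : phi t = 1) : s = t :=
  strictAntiOn_phi.injOn (one_le_of_phi_eq_one hs hφs) (one_le_of_phi_eq_one ht hφt)
    (hφs.trans hφt.symm)

section Maximum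

variable {c : ℝ}

lemma one_lt_phi_of_lt (hc : 0 < c) (hφc : phi c = 1) {x : ℝ} (hx : 0 < x) (hxc : x < c) :
    1 < phi x := by
  rcases le_or_gt x 1 with hx1 | hx1
  · exact one_lt_phi hx hx1
  · exact hφc ▸ strictAntiOn_phi hx1.le (one_le_of_phi_eq_one hc hφc) hxc

lemma phi_lt_one_of_lt (hc : 0 < c) (hφc : phi c = 1) {x : ℝ} (hcx : c < x) : phi x < 1 := by
  have hc1 := one_le_of_phi_eq_one hc hφc
  exact hφc ▸ strictAntiOn_phi hc1 (hc1.trans hcx.le) hcx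

lemma strictMonoOn_psi (hc : 0 < c) (hφc : phi c = 1) : StrictMonoOn psi (Ioc 0 c) := by
  refine strictMonoOn_of_deriv_pos (convex_Ioc 0 c) (continuousOn_psi fun x hx => hx.1)
    fun x hx => ?_
  rw [interior_Ioc] at hx
  rw [(hasDerivAt_psi hx.1.ne').deriv]
  have := one_lt_phi_of_lt hc hφc hx.1 hx.2
  exact div_pos (by linarith) (pow_pos hx.1 2)

lemma strictAntiOn_psi (hc : 0 < c) (hφc : phi c = 1) : StrictAntiOn psi (Ici c) := by
  refine strictAntiOn_of_deriv_neg (convex_Ici c)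
    (continuousOn_psi fun x (hx : c ≤ x) => hc.trans_le hx) fun x hx => ?_
  rw [interior_Ici] at hx
  have hx0 : 0 < x := hc.trans hx
  rw [(hasDerivAt_psi hx0.ne').deriv]
  have := phi_lt_one_of_lt hc hφc hx
  exact div_neg_of_neg_of_pos (by linarith) (pow_pos hx0 2)

lemma psi_le_of_phi_eq_one (hc : 0 < c) (hφc : phi c = 1) {s : ℝ} (hs : 0 < s) :
    psi s ≤ psi c := by
  rcases le_total s c with hsc | hcs
  · exact (strictMonoOn_psi hc hφc).monotoneOn ⟨hs, hsc⟩ ⟨hc, le_rfl⟩ hsc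
  · exact (strictAntiOn_psi hc hφc).antitoneOn (mem_Ici.2 le_rfl) hcs hcs

lemma psi_eq_of_phi_eq_one (hc : 0 < c) (hφc : phi c = 1) : psi c = c / (1 + c + c ^ 2) := by
  have hden : 0 < 1 + c + c ^ 2 := by positivity
  have hexp : exp (-c) = 1 / (1 + c + c ^ 2) := by
    rw [eq_div_iff hden.ne', mul_comm]; exact hφc
  rw [psi, hexp]
  field_simp
  ring

end Maximum

lemma exp_089_le : exp 0.89 ≤ 2.4352 := by
  calc exp 0.89 ≤ (∑ m ∈ Finset.range 6, (0.89 : ℝ) ^ m / m.factorial) +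
        0.89 ^ 6 * (6 + 1) / (Nat.factorial 6 * 6) :=
        exp_bound' (by norm_num) (by norm_num) (by norm_num)
    _ ≤ 2.4352 := by norm_num [Finset.sum_range_succ, Nat.factorial]

lemma exp_178_le : exp 1.78 ≤ 5.9303 := by
  have h : exp 1.78 = exp 0.89 * exp 0.89 := by rw [← exp_add]; norm_num
  nlinarith [exp_089_le, exp_pos 0.89]

lemma lt_exp_19 : (6.51 : ℝ) < exp 1.9 := by
  have h := sum_le_exp_of_nonneg (by norm_num : (0 : ℝ) ≤ 1.9) 6
  have : (6.59 : ℝ) ≤ ∑ i ∈ Finset.range 6, (1.9 : ℝ) ^ i / i.factorial := by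
    norm_num [Finset.sum_range_succ, Nat.factorial]
  linarith

lemma one_le_phi_iff {s : ℝ} : 1 ≤ phi s ↔ exp s ≤ 1 + s + s ^ 2 := by
  rw [phi, exp_neg, ← div_eq_mul_inv, one_le_div (exp_pos s)]

lemma exists_phi_eq_one : ∃ c ∈ Ico (1.78 : ℝ) 1.9, phi c = 1 := by
  have h178 : 1 ≤ phi 1.78 := one_le_phi_iff.2 (by linarith [exp_178_le])
  have h19 : phi 1.9 < 1 := lt_of_not_ge fun h => by linarith [one_le_phi_iff.1 h, lt_exp_19]
  exact intermediate_value_Ico' (by norm_num) continuous_phi.continuousOn ⟨h19, h178⟩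

lemma psi_lt_of_phi_eq_one {c : ℝ} (hc : 1.78 ≤ c) (hφc : phi c = 1) : psi c < 0.3 := by
  have hc0 : 0 < c := by linarith
  rw [psi_eq_of_phi_eq_one hc0 hφc, div_lt_iff₀ (by positivity)]
  nlinarith

lemma one_sub_phi_div_sq_eq_zero_iff {t : ℝ} (ht : t ≠ 0) :
    (1 - phi t) / t ^ 2 = 0 ↔ phi t = 1 := by
  rw [div_eq_zero_iff, sub_eq_zero, eq_comm]
  simp [ht]

lemma abs_mul_exp_sub_one_div_eq_psi {s : ℝ} (hs : 0 ≤ s) : |((1 + s) * exp (-s) - 1) / s| = psi s := by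
  rw [← abs_of_nonneg (psi_nonneg hs), psi, ← abs_neg, ← neg_div, neg_sub]

end Parareal

open Parareal

theorem stmt_5 :
    (∀ s : ℝ, 0 < s → 0 ≤ (1 - (1 + s) * Real.exp (-s)) / s) ∧
    ∃ sstar : ℝ,
      (0 < sstar ∧ (1 - (1 + sstar + sstar ^ 2) * Real.exp (-sstar)) / sstar ^ 2 = 0) ∧
      (∀ t : ℝ, 0 < t → (1 - (1 + t + t ^ 2) * Real.exp (-t)) / t ^ 2 = 0 → t = sstar) ∧
      sstar ∈ Set.Ioo (1.7 : ℝ) 1.9 ∧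
      (1 - (1 + sstar) * Real.exp (-sstar)) / sstar < 0.3 ∧
      ∀ s : ℝ, 0 < s → |((1 + s) * Real.exp (-s) - 1) / s| < 0.3 := by
  obtain ⟨c, ⟨hc178, hc19⟩, hφc⟩ := exists_phi_eq_one
  have hc : 0 < c := by linarith
  have hψc : psi c < 0.3 := psi_lt_of_phi_eq_one hc178 hφc
  refine ⟨fun s hs => psi_nonneg hs.le, c, ⟨hc, (one_sub_phi_div_sq_eq_zero_iff hc.ne').2 hφc⟩,
    fun t ht h => eq_of_phi_eq_one ht hc ((one_sub_phi_div_sq_eq_zero_iff ht.ne').1 h) hφc,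
    ⟨by linarith, hc19⟩, hψc, fun s hs => ?_⟩
  rw [abs_mul_exp_sub_one_div_eq_psi hs.le]
  exact (psi_le_of_phi_eq_one hc hφc hs).trans_lt hψc
end

section
/- For β = 1.02, sup_{s ∈ (0,∞)} |((1+s)e^{-βs} - 1)/s| ≤ 0.31. -/
open Real

private lemma expL : (0.9502:ℝ) ≤ Real.exp (-0.051) := by
  have h : (1 - 0.051/32 : ℝ) ≤ Real.exp (-(0.051/32)) := by
    have := Real.add_one_le_exp (-(0.051/32) : ℝ); linarith
  calc (0.9502:ℝ) ≤ (1 - 0.051/32)^32 := by norm_num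
    _ ≤ (Real.exp (-(0.051/32)))^32 := by
        apply pow_le_pow_left₀ (by norm_num) h
    _ = Real.exp (-0.051) := by
        rw [← Real.exp_nat_mul]; norm_num

private lemma Ebound (k : ℕ) (a E : ℝ) (hak : a = k/20) (hEk : E ≤ 0.9502^k) :
    E ≤ Real.exp (-(1.02:ℝ) * a) := by
  subst hak
  refine hEk.trans ?_
  have h : -(1.02:ℝ) * ((k:ℝ)/20) = (k:ℝ) * (-0.051) := by ring
  rw [h, Real.exp_nat_mul]
  exact pow_le_pow_left₀ (by norm_num) expL k

private lemma key (a E s : ℝ) (hE : E ≤ Real.exp (-(1.02:ℝ) * a))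
    (hb : s ≤ a + 0.05) :
    E * (1 - 1.02 * (s - a)) ≤ Real.exp (-(1.02:ℝ) * s) := by
  have h1 : (1 - 1.02 * (s - a)) ≤ Real.exp (-(1.02:ℝ) * (s - a)) := by
    have := Real.add_one_le_exp (-(1.02:ℝ) * (s - a)); linarith
  have h2 : (0:ℝ) ≤ 1 - 1.02 * (s - a) := by nlinarith
  calc E * (1 - 1.02 * (s - a))
      ≤ Real.exp (-(1.02:ℝ) * a) * Real.exp (-(1.02:ℝ) * (s - a)) :=
        mul_le_mul hE h1 h2 (Real.exp_pos _).le
    _ = Real.exp (-(1.02:ℝ) * s) := by rw [← Real.exp_add]; ring_nf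

private lemma piece (a E b s : ℝ) (hab : b = a + 0.05) (ha0 : 0 ≤ a) (hE0 : 0 ≤ E)
    (hE : E ≤ Real.exp (-(1.02:ℝ) * a))
    (ha : a ≤ s) (hb : s ≤ b)
    (hqa : 0 ≤ (1 + a) * E + 0.31 * a - 1)
    (hqb : 0 ≤ (1 + (a + 0.05)) * (E * (1 - 1.02 * 0.05)) + 0.31 * (a + 0.05) - 1) :
    -(0.31 * s) ≤ (1 + s) * Real.exp (-(1.02:ℝ) * s) - 1 := by
  subst hab
  have hp := key a E s hE hb
  have hm := mul_le_mul_of_nonneg_left hp (by linarith : (0:ℝ) ≤ 1 + s)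
  nlinarith [hm, mul_nonneg (by linarith : (0:ℝ) ≤ s - a) (by linarith : (0:ℝ) ≤ a + 0.05 - s),
    mul_nonneg (mul_nonneg (by linarith : (0:ℝ) ≤ s - a) (by linarith : (0:ℝ) ≤ a + 0.05 - s)) hE0,
    mul_nonneg (by linarith : (0:ℝ) ≤ a + 0.05 - s) hqa,
    mul_nonneg (by linarith : (0:ℝ) ≤ s - a) hqb]

theorem stmt_7 (s : ℝ) (hs : 0 < s) :
    |((1 + s) * Real.exp (-(1.02 : ℝ) * s) - 1) / s| ≤ 0.31 := by
  have hX := Real.exp_pos (-(1.02:ℝ) * s)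
  rw [abs_div, abs_of_pos hs, div_le_iff₀ hs, abs_le]
  constructor
  · -- lower bound: the hard direction
    rcases le_or_gt (3.3:ℝ) s with h33 | h33
    · nlinarith [mul_pos (by linarith : (0:ℝ) < 1 + s) hX]
    rcases le_or_gt s 0.05 with hb | ha1
    · exact piece 0 1 0.05 s (by norm_num) (by norm_num) (by norm_num) (Ebound 0 0 1 (by norm_num) (by norm_num)) hs.le hb (by norm_num) (by norm_num)
    rcases le_or_gt s 0.1 with hb | ha2
    · exact piece 0.05 0.9502 0.1 s (by norm_num) (by norm_num) (by norm_num) (Ebound 1 0.05 0.9502 (by norm_num) (by norm_num)) ha1.le hb (by norm_num) (by norm_num)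
    rcases le_or_gt s 0.15 with hb | ha3
    · exact piece 0.1 0.90288 0.15 s (by norm_num) (by norm_num) (by norm_num) (Ebound 2 0.1 0.90288 (by norm_num) (by norm_num)) ha2.le hb (by norm_num) (by norm_num)
    rcases le_or_gt s 0.2 with hb | ha4
    · exact piece 0.15 0.8579166 0.2 s (by norm_num) (by norm_num) (by norm_num) (Ebound 3 0.15 0.8579166 (by norm_num) (by norm_num)) ha3.le hb (by norm_num) (by norm_num)
    rcases le_or_gt s 0.25 with hb | ha5
    · exact piece 0.2 0.8151923 0.25 s (by norm_num) (by norm_num) (by norm_num) (Ebound 4 0.2 0.8151923 (by norm_num) (by norm_num)) ha4.le hb (by norm_num) (by norm_num)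
    rcases le_or_gt s 0.3 with hb | ha6
    · exact piece 0.25 0.7745957 0.3 s (by norm_num) (by norm_num) (by norm_num) (Ebound 5 0.25 0.7745957 (by norm_num) (by norm_num)) ha5.le hb (by norm_num) (by norm_num)
    rcases le_or_gt s 0.35 with hb | ha7
    · exact piece 0.3 0.7360209 0.35 s (by norm_num) (by norm_num) (by norm_num) (Ebound 6 0.3 0.7360209 (by norm_num) (by norm_num)) ha6.le hb (by norm_num) (by norm_num)
    rcases le_or_gt s 0.4 with hb | ha8
    · exact piece 0.35 0.699367 0.4 s (by norm_num) (by norm_num) (by norm_num) (Ebound 7 0.35 0.699367 (by norm_num) (by norm_num)) ha7.le hb (by norm_num) (by norm_num)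
    rcases le_or_gt s 0.45 with hb | ha9
    · exact piece 0.4 0.6645385 0.45 s (by norm_num) (by norm_num) (by norm_num) (Ebound 8 0.4 0.6645385 (by norm_num) (by norm_num)) ha8.le hb (by norm_num) (by norm_num)
    rcases le_or_gt s 0.5 with hb | ha10
    · exact piece 0.45 0.6314445 0.5 s (by norm_num) (by norm_num) (by norm_num) (Ebound 9 0.45 0.6314445 (by norm_num) (by norm_num)) ha9.le hb (by norm_num) (by norm_num)
    rcases le_or_gt s 0.55 with hb | ha11
    · exact piece 0.5 0.5999986 0.55 s (by norm_num) (by norm_num) (by norm_num) (Ebound 10 0.5 0.5999986 (by norm_num) (by norm_num)) ha10.le hb (by norm_num) (by norm_num)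
    rcases le_or_gt s 0.6 with hb | ha12
    · exact piece 0.55 0.5701187 0.6 s (by norm_num) (by norm_num) (by norm_num) (Ebound 11 0.55 0.5701187 (by norm_num) (by norm_num)) ha11.le hb (by norm_num) (by norm_num)
    rcases le_or_gt s 0.65 with hb | ha13
    · exact piece 0.6 0.5417267 0.65 s (by norm_num) (by norm_num) (by norm_num) (Ebound 12 0.6 0.5417267 (by norm_num) (by norm_num)) ha12.le hb (by norm_num) (by norm_num)
    rcases le_or_gt s 0.7 with hb | ha14
    · exact piece 0.65 0.5147487 0.7 s (by norm_num) (by norm_num) (by norm_num) (Ebound 13 0.65 0.5147487 (by norm_num) (by norm_num)) ha13.le hb (by norm_num) (by norm_num)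
    rcases le_or_gt s 0.75 with hb | ha15
    · exact piece 0.7 0.4891143 0.75 s (by norm_num) (by norm_num) (by norm_num) (Ebound 14 0.7 0.4891143 (by norm_num) (by norm_num)) ha14.le hb (by norm_num) (by norm_num)
    rcases le_or_gt s 0.8 with hb | ha16
    · exact piece 0.75 0.4647564 0.8 s (by norm_num) (by norm_num) (by norm_num) (Ebound 15 0.75 0.4647564 (by norm_num) (by norm_num)) ha15.le hb (by norm_num) (by norm_num)
    rcases le_or_gt s 0.85 with hb | ha17
    · exact piece 0.8 0.4416115 0.85 s (by norm_num) (by norm_num) (by norm_num) (Ebound 16 0.8 0.4416115 (by norm_num) (by norm_num)) ha16.le hb (by norm_num) (by norm_num)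
    rcases le_or_gt s 0.9 with hb | ha18
    · exact piece 0.85 0.4196192 0.9 s (by norm_num) (by norm_num) (by norm_num) (Ebound 17 0.85 0.4196192 (by norm_num) (by norm_num)) ha17.le hb (by norm_num) (by norm_num)
    rcases le_or_gt s 0.95 with hb | ha19
    · exact piece 0.9 0.3987222 0.95 s (by norm_num) (by norm_num) (by norm_num) (Ebound 18 0.9 0.3987222 (by norm_num) (by norm_num)) ha18.le hb (by norm_num) (by norm_num)
    rcases le_or_gt s 1 with hb | ha20
    · exact piece 0.95 0.3788658 1 s (by norm_num) (by norm_num) (by norm_num) (Ebound 19 0.95 0.3788658 (by norm_num) (by norm_num)) ha19.le hb (by norm_num) (by norm_num)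
    rcases le_or_gt s 1.05 with hb | ha21
    · exact piece 1 0.3599983 1.05 s (by norm_num) (by norm_num) (by norm_num) (Ebound 20 1 0.3599983 (by norm_num) (by norm_num)) ha20.le hb (by norm_num) (by norm_num)
    rcases le_or_gt s 1.1 with hb | ha22
    · exact piece 1.05 0.3420704 1.1 s (by norm_num) (by norm_num) (by norm_num) (Ebound 21 1.05 0.3420704 (by norm_num) (by norm_num)) ha21.le hb (by norm_num) (by norm_num)
    rcases le_or_gt s 1.15 with hb | ha23
    · exact piece 1.1 0.3250353 1.15 s (by norm_num) (by norm_num) (by norm_num) (Ebound 22 1.1 0.3250353 (by norm_num) (by norm_num)) ha22.le hb (by norm_num) (by norm_num)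
    rcases le_or_gt s 1.2 with hb | ha24
    · exact piece 1.15 0.3088485 1.2 s (by norm_num) (by norm_num) (by norm_num) (Ebound 23 1.15 0.3088485 (by norm_num) (by norm_num)) ha23.le hb (by norm_num) (by norm_num)
    rcases le_or_gt s 1.25 with hb | ha25
    · exact piece 1.2 0.2934679 1.25 s (by norm_num) (by norm_num) (by norm_num) (Ebound 24 1.2 0.2934679 (by norm_num) (by norm_num)) ha24.le hb (by norm_num) (by norm_num)
    rcases le_or_gt s 1.3 with hb | ha26
    · exact piece 1.25 0.2788532 1.3 s (by norm_num) (by norm_num) (by norm_num) (Ebound 25 1.25 0.2788532 (by norm_num) (by norm_num)) ha25.le hb (by norm_num) (by norm_num)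
    rcases le_or_gt s 1.35 with hb | ha27
    · exact piece 1.3 0.2649663 1.35 s (by norm_num) (by norm_num) (by norm_num) (Ebound 26 1.3 0.2649663 (by norm_num) (by norm_num)) ha26.le hb (by norm_num) (by norm_num)
    rcases le_or_gt s 1.4 with hb | ha28
    · exact piece 1.35 0.2517709 1.4 s (by norm_num) (by norm_num) (by norm_num) (Ebound 27 1.35 0.2517709 (by norm_num) (by norm_num)) ha27.le hb (by norm_num) (by norm_num)
    rcases le_or_gt s 1.45 with hb | ha29
    · exact piece 1.4 0.2392328 1.45 s (by norm_num) (by norm_num) (by norm_num) (Ebound 28 1.4 0.2392328 (by norm_num) (by norm_num)) ha28.le hb (by norm_num) (by norm_num)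
    rcases le_or_gt s 1.5 with hb | ha30
    · exact piece 1.45 0.227319 1.5 s (by norm_num) (by norm_num) (by norm_num) (Ebound 29 1.45 0.227319 (by norm_num) (by norm_num)) ha29.le hb (by norm_num) (by norm_num)
    rcases le_or_gt s 1.55 with hb | ha31
    · exact piece 1.5 0.2159985 1.55 s (by norm_num) (by norm_num) (by norm_num) (Ebound 30 1.5 0.2159985 (by norm_num) (by norm_num)) ha30.le hb (by norm_num) (by norm_num)
    rcases le_or_gt s 1.6 with hb | ha32
    · exact piece 1.55 0.2052417 1.6 s (by norm_num) (by norm_num) (by norm_num) (Ebound 31 1.55 0.2052417 (by norm_num) (by norm_num)) ha31.le hb (by norm_num) (by norm_num)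
    rcases le_or_gt s 1.65 with hb | ha33
    · exact piece 1.6 0.1950207 1.65 s (by norm_num) (by norm_num) (by norm_num) (Ebound 32 1.6 0.1950207 (by norm_num) (by norm_num)) ha32.le hb (by norm_num) (by norm_num)
    rcases le_or_gt s 1.7 with hb | ha34
    · exact piece 1.65 0.1853087 1.7 s (by norm_num) (by norm_num) (by norm_num) (Ebound 33 1.65 0.1853087 (by norm_num) (by norm_num)) ha33.le hb (by norm_num) (by norm_num)
    rcases le_or_gt s 1.75 with hb | ha35
    · exact piece 1.7 0.1760803 1.75 s (by norm_num) (by norm_num) (by norm_num) (Ebound 34 1.7 0.1760803 (by norm_num) (by norm_num)) ha34.le hb (by norm_num) (by norm_num)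
    rcases le_or_gt s 1.8 with hb | ha36
    · exact piece 1.75 0.1673115 1.8 s (by norm_num) (by norm_num) (by norm_num) (Ebound 35 1.75 0.1673115 (by norm_num) (by norm_num)) ha35.le hb (by norm_num) (by norm_num)
    rcases le_or_gt s 1.85 with hb | ha37
    · exact piece 1.8 0.1589794 1.85 s (by norm_num) (by norm_num) (by norm_num) (Ebound 36 1.8 0.1589794 (by norm_num) (by norm_num)) ha36.le hb (by norm_num) (by norm_num)
    rcases le_or_gt s 1.9 with hb | ha38
    · exact piece 1.85 0.1510622 1.9 s (by norm_num) (by norm_num) (by norm_num) (Ebound 37 1.85 0.1510622 (by norm_num) (by norm_num)) ha37.le hb (by norm_num) (by norm_num)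
    rcases le_or_gt s 1.95 with hb | ha39
    · exact piece 1.9 0.1435393 1.95 s (by norm_num) (by norm_num) (by norm_num) (Ebound 38 1.9 0.1435393 (by norm_num) (by norm_num)) ha38.le hb (by norm_num) (by norm_num)
    rcases le_or_gt s 2 with hb | ha40
    · exact piece 1.95 0.136391 2 s (by norm_num) (by norm_num) (by norm_num) (Ebound 39 1.95 0.136391 (by norm_num) (by norm_num)) ha39.le hb (by norm_num) (by norm_num)
    rcases le_or_gt s 2.05 with hb | ha41
    · exact piece 2 0.1295988 2.05 s (by norm_num) (by norm_num) (by norm_num) (Ebound 40 2 0.1295988 (by norm_num) (by norm_num)) ha40.le hb (by norm_num) (by norm_num)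
    rcases le_or_gt s 2.1 with hb | ha42
    · exact piece 2.05 0.1231447 2.1 s (by norm_num) (by norm_num) (by norm_num) (Ebound 41 2.05 0.1231447 (by norm_num) (by norm_num)) ha41.le hb (by norm_num) (by norm_num)
    rcases le_or_gt s 2.15 with hb | ha43
    · exact piece 2.1 0.1170121 2.15 s (by norm_num) (by norm_num) (by norm_num) (Ebound 42 2.1 0.1170121 (by norm_num) (by norm_num)) ha42.le hb (by norm_num) (by norm_num)
    rcases le_or_gt s 2.2 with hb | ha44
    · exact piece 2.15 0.1111849 2.2 s (by norm_num) (by norm_num) (by norm_num) (Ebound 43 2.15 0.1111849 (by norm_num) (by norm_num)) ha43.le hb (by norm_num) (by norm_num)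
    rcases le_or_gt s 2.25 with hb | ha45
    · exact piece 2.2 0.1056479 2.25 s (by norm_num) (by norm_num) (by norm_num) (Ebound 44 2.2 0.1056479 (by norm_num) (by norm_num)) ha44.le hb (by norm_num) (by norm_num)
    rcases le_or_gt s 2.3 with hb | ha46
    · exact piece 2.25 0.1003866 2.3 s (by norm_num) (by norm_num) (by norm_num) (Ebound 45 2.25 0.1003866 (by norm_num) (by norm_num)) ha45.le hb (by norm_num) (by norm_num)
    rcases le_or_gt s 2.35 with hb | ha47
    · exact piece 2.3 0.0953874 2.35 s (by norm_num) (by norm_num) (by norm_num) (Ebound 46 2.3 0.0953874 (by norm_num) (by norm_num)) ha46.le hb (by norm_num) (by norm_num)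
    rcases le_or_gt s 2.4 with hb | ha48
    · exact piece 2.35 0.0906371 2.4 s (by norm_num) (by norm_num) (by norm_num) (Ebound 47 2.35 0.0906371 (by norm_num) (by norm_num)) ha47.le hb (by norm_num) (by norm_num)
    rcases le_or_gt s 2.45 with hb | ha49
    · exact piece 2.4 0.0861234 2.45 s (by norm_num) (by norm_num) (by norm_num) (Ebound 48 2.4 0.0861234 (by norm_num) (by norm_num)) ha48.le hb (by norm_num) (by norm_num)
    rcases le_or_gt s 2.5 with hb | ha50
    · exact piece 2.45 0.0818344 2.5 s (by norm_num) (by norm_num) (by norm_num) (Ebound 49 2.45 0.0818344 (by norm_num) (by norm_num)) ha49.le hb (by norm_num) (by norm_num)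
    rcases le_or_gt s 2.55 with hb | ha51
    · exact piece 2.5 0.0777591 2.55 s (by norm_num) (by norm_num) (by norm_num) (Ebound 50 2.5 0.0777591 (by norm_num) (by norm_num)) ha50.le hb (by norm_num) (by norm_num)
    rcases le_or_gt s 2.6 with hb | ha52
    · exact piece 2.55 0.0738867 2.6 s (by norm_num) (by norm_num) (by norm_num) (Ebound 51 2.55 0.0738867 (by norm_num) (by norm_num)) ha51.le hb (by norm_num) (by norm_num)
    rcases le_or_gt s 2.65 with hb | ha53
    · exact piece 2.6 0.0702071 2.65 s (by norm_num) (by norm_num) (by norm_num) (Ebound 52 2.6 0.0702071 (by norm_num) (by norm_num)) ha52.le hb (by norm_num) (by norm_num)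
    rcases le_or_gt s 2.7 with hb | ha54
    · exact piece 2.65 0.0667108 2.7 s (by norm_num) (by norm_num) (by norm_num) (Ebound 53 2.65 0.0667108 (by norm_num) (by norm_num)) ha53.le hb (by norm_num) (by norm_num)
    rcases le_or_gt s 2.75 with hb | ha55
    · exact piece 2.7 0.0633886 2.75 s (by norm_num) (by norm_num) (by norm_num) (Ebound 54 2.7 0.0633886 (by norm_num) (by norm_num)) ha54.le hb (by norm_num) (by norm_num)
    rcases le_or_gt s 2.8 with hb | ha56
    · exact piece 2.75 0.0602318 2.8 s (by norm_num) (by norm_num) (by norm_num) (Ebound 55 2.75 0.0602318 (by norm_num) (by norm_num)) ha55.le hb (by norm_num) (by norm_num)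
    rcases le_or_gt s 2.85 with hb | ha57
    · exact piece 2.8 0.0572323 2.85 s (by norm_num) (by norm_num) (by norm_num) (Ebound 56 2.8 0.0572323 (by norm_num) (by norm_num)) ha56.le hb (by norm_num) (by norm_num)
    rcases le_or_gt s 2.9 with hb | ha58
    · exact piece 2.85 0.0543821 2.9 s (by norm_num) (by norm_num) (by norm_num) (Ebound 57 2.85 0.0543821 (by norm_num) (by norm_num)) ha57.le hb (by norm_num) (by norm_num)
    rcases le_or_gt s 2.95 with hb | ha59
    · exact piece 2.9 0.0516739 2.95 s (by norm_num) (by norm_num) (by norm_num) (Ebound 58 2.9 0.0516739 (by norm_num) (by norm_num)) ha58.le hb (by norm_num) (by norm_num)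
    rcases le_or_gt s 3 with hb | ha60
    · exact piece 2.95 0.0491005 3 s (by norm_num) (by norm_num) (by norm_num) (Ebound 59 2.95 0.0491005 (by norm_num) (by norm_num)) ha59.le hb (by norm_num) (by norm_num)
    rcases le_or_gt s 3.05 with hb | ha61
    · exact piece 3 0.0466553 3.05 s (by norm_num) (by norm_num) (by norm_num) (Ebound 60 3 0.0466553 (by norm_num) (by norm_num)) ha60.le hb (by norm_num) (by norm_num)
    rcases le_or_gt s 3.1 with hb | ha62
    · exact piece 3.05 0.0443319 3.1 s (by norm_num) (by norm_num) (by norm_num) (Ebound 61 3.05 0.0443319 (by norm_num) (by norm_num)) ha61.le hb (by norm_num) (by norm_num)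
    rcases le_or_gt s 3.15 with hb | ha63
    · exact piece 3.1 0.0421241 3.15 s (by norm_num) (by norm_num) (by norm_num) (Ebound 62 3.1 0.0421241 (by norm_num) (by norm_num)) ha62.le hb (by norm_num) (by norm_num)
    rcases le_or_gt s 3.2 with hb | ha64
    · exact piece 3.15 0.0400264 3.2 s (by norm_num) (by norm_num) (by norm_num) (Ebound 63 3.15 0.0400264 (by norm_num) (by norm_num)) ha63.le hb (by norm_num) (by norm_num)
    rcases le_or_gt s 3.25 with hb | ha65
    · exact piece 3.2 0.038033 3.25 s (by norm_num) (by norm_num) (by norm_num) (Ebound 64 3.2 0.038033 (by norm_num) (by norm_num)) ha64.le hb (by norm_num) (by norm_num)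
    exact piece 3.25 0.036139 3.3 s (by norm_num) (by norm_num) (by norm_num) (Ebound 65 3.25 0.036139 (by norm_num) (by norm_num)) ha65.le h33.le (by norm_num) (by norm_num)
  · -- upper bound
    have he : Real.exp (-(1.02:ℝ) * s) * Real.exp ((1.02:ℝ) * s) = 1 := by
      rw [← Real.exp_add]; norm_num
    have h := Real.add_one_le_exp ((1.02:ℝ) * s)
    nlinarith [mul_le_mul_of_nonneg_left h hX.le, he, hs.le, hX.le]
end

section
/- Let r(-s) = 2/(s² + 2s + 2) be the stability function of the two-stage Lobatto IIIC method. Then for all s > 0, r(-s) ≥ e^{-1.02 s}, and for all s ∈ (0, 3.2), r(-s) ≤ e^{-0.69 s}. -/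
open Real

lemma exp_upper_aux {t : ℝ} (h1 : 0 ≤ t) (h2 : t ≤ 1) :
    Real.exp t ≤ 1 + t + t ^ 2 / 2 + t ^ 3 / 6 + t ^ 4 / 24 + t ^ 5 / 100 := by
  have h := Real.exp_bound' h1 h2 (n := 5) (by norm_num)
  have hs : (∑ m ∈ Finset.range 5, t ^ m / m.factorial) =
      1 + t + t ^ 2 / 2 + t ^ 3 / 6 + t ^ 4 / 24 := by
    simp [Finset.sum_range_succ, Nat.factorial]
  rw [hs] at h
  calc Real.exp t ≤ 1 + t + t ^ 2 / 2 + t ^ 3 / 6 + t ^ 4 / 24 +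
        t ^ 5 * (5 + 1) / (Nat.factorial 5 * 5) := h
    _ = 1 + t + t ^ 2 / 2 + t ^ 3 / 6 + t ^ 4 / 24 + t ^ 5 / 100 := by
        norm_num [Nat.factorial]; ring

theorem stmt_9 :
    (∀ s : ℝ, 0 < s → Real.exp (-(1.02 : ℝ) * s) ≤ 2 / (s ^ 2 + 2 * s + 2)) ∧
    (∀ s ∈ Set.Ioo (0 : ℝ) 3.2, 2 / (s ^ 2 + 2 * s + 2) ≤ Real.exp (-(0.69 : ℝ) * s)) := by
  constructor
  · intro s hs
    have hq : (0 : ℝ) < s ^ 2 + 2 * s + 2 := by nlinarith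
    have hE := Real.quadratic_le_exp_of_nonneg (x := 1.02 * s) (by nlinarith)
    have hEpos : (0 : ℝ) < Real.exp (1.02 * s) := Real.exp_pos _
    rw [le_div_iff₀ hq, show -(1.02 : ℝ) * s = -(1.02 * s) by ring, Real.exp_neg,
      inv_mul_le_iff₀ hEpos]
    nlinarith [hE, sq_nonneg s]
  · rintro s ⟨hs0, hs32⟩
    have hs32' : s < 16 / 5 := by norm_num at hs32 ⊢; linarith
    have hq : (0 : ℝ) < s ^ 2 + 2 * s + 2 := by nlinarith
    set t : ℝ := 0.23 * s with ht
    have ht0 : 0 ≤ t := by positivity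
    have ht1 : t ≤ 1 := by rw [ht]; nlinarith
    have hP := exp_upper_aux ht0 ht1
    have hEpos : (0 : ℝ) < Real.exp t := Real.exp_pos _
    have h3 : Real.exp (0.69 * s) = Real.exp t ^ 3 := by
      rw [← Real.exp_nat_mul]
      norm_num [ht]; ring_nf
    rw [show -(0.69 : ℝ) * s = -(0.69 * s) by ring, Real.exp_neg, div_le_iff₀ hq,
      h3, inv_mul_eq_div, le_div_iff₀ (by positivity)]
    have hcube : Real.exp t ^ 3 ≤
        (1 + t + t ^ 2 / 2 + t ^ 3 / 6 + t ^ 4 / 24 + t ^ 5 / 100) ^ 3 := by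
      have hPpos : (0:ℝ) ≤ Real.exp t := hEpos.le
      gcongr
    have key : 2 * (1 + t + t ^ 2 / 2 + t ^ 3 / 6 + t ^ 4 / 24 + t ^ 5 / 100) ^ 3
        ≤ s ^ 2 + 2 * s + 2 := by
      rw [ht]
      have pow_le : ∀ k : ℕ, s ^ (k + 2) ≤ (16 / 5) ^ k * s ^ 2 := by
        intro k
        calc s ^ (k + 2) = s ^ k * s ^ 2 := by ring
          _ ≤ (16 / 5) ^ k * s ^ 2 :=
              mul_le_mul_of_nonneg_right (pow_le_pow_left₀ hs0.le hs32'.le k) (sq_nonneg s)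
      nlinarith [pow_le 1, pow_le 2, pow_le 3, pow_le 4, pow_le 5, pow_le 6,
        pow_le 7, pow_le 8, pow_le 9, pow_le 10, pow_le 11, pow_le 12,
        sq_nonneg s, hs0.le]
    nlinarith [hcube, key]
end

section
/- Let r(-s) = 2/(s²+2s+2). For every integer J ≥ 2, sup_{s ∈ (0,∞)} |((1+s)·r(-s/J)^J - 1)/s| ≤ 0.31. -/
/-!
Write `R t = 2 / (t² + 2t + 2)` and `t = s / J`. Since `1 + t + t²/2 ≤ eᵗ` and `2 + 2t ≤ t² + 2t + 2`,
we have `e⁻ᵗ ≤ R t ≤ 1 / (1 + t)`; raising to the `J`-th power and using Bernoulli's inequality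
`1 + s ≤ (1 + t)ᴶ` gives `(1 + s) e⁻ˢ ≤ (1 + s) (R t)ᴶ ≤ 1`. It remains to show
`1 - 0.31 s ≤ (1 + s) e⁻ˢ` (the worst ratio is about `0.2984`, near `s ≈ 1.79`). For `s < 4` this
follows from the Padé bound `(2 - x)/(2 + x) ≤ e⁻ˣ` at `x = s/4`, which reduces it to a polynomial
inequality.
-/

open Real

lemma two_sub_div_two_add_le_exp_neg {x : ℝ} (h0 : 0 ≤ x) (h1 : x ≤ 1) :
    (2 - x) / (2 + x) ≤ exp (-x) := by
  have htaylor : exp x ≤ 1 + x + x ^ 2 / 2 + 2 / 9 * x ^ 3 := by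
    have h := exp_bound' h0 h1 (n := 3) (by norm_num)
    norm_num [Finset.sum_range_succ, Nat.factorial] at h
    linarith
  rw [exp_neg, div_le_iff₀ (by linarith), ← div_eq_inv_mul, le_div_iff₀ (exp_pos x)]
  nlinarith [pow_nonneg h0 3, pow_nonneg h0 4]

lemma one_sub_mul_le_one_add_mul_exp_neg {s : ℝ} (hs : 0 ≤ s) :
    1 - 31 / 100 * s ≤ (1 + s) * exp (-s) := by
  rcases le_or_gt 4 s with h4 | h4
  · nlinarith [exp_pos (-s)]
  have hpade : ((8 - s) / (8 + s)) ^ 4 ≤ exp (-s) :=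
    calc ((8 - s) / (8 + s)) ^ 4 = ((2 - s / 4) / (2 + s / 4)) ^ 4 := by
          congr 1; field_simp; ring
      _ ≤ exp (-(s / 4)) ^ 4 := by
          gcongr
          · exact div_nonneg (by linarith) (by linarith)
          · exact two_sub_div_two_add_le_exp_neg (by linarith) (by linarith)
      _ = exp (-s) := by rw [← exp_nat_mul]; ring_nf
  -- The difference of the two sides is `s` times a quartic without real roots.
  have hpoly : (1 - 31 / 100 * s) * (8 + s) ^ 4 ≤ (1 + s) * (8 - s) ^ 4 := by
    nlinarith [mul_nonneg hs (sq_nonneg (s ^ 2 - 8 * s + 11)), mul_nonneg hs (sq_nonneg (s - 2))]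
  calc 1 - 31 / 100 * s ≤ (1 + s) * ((8 - s) / (8 + s)) ^ 4 := by
        rw [div_pow, mul_div_assoc', le_div_iff₀ (by positivity)]; exact hpoly
    _ ≤ (1 + s) * exp (-s) := by gcongr

/-- `lobattoStab t = r (-t)`, where `r` is the stability function of the 2-stage Lobatto IIIC
method. -/
noncomputable def lobattoStab (t : ℝ) : ℝ := 2 / (t ^ 2 + 2 * t + 2)

lemma lobattoStab_pos (t : ℝ) : 0 < lobattoStab t :=
  div_pos two_pos (by nlinarith [sq_nonneg (t + 1)])

lemma one_add_mul_lobattoStab_le_one (t : ℝ) : (1 + t) * lobattoStab t ≤ 1 := by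
  unfold lobattoStab
  rw [mul_div_assoc', div_le_one (by nlinarith [sq_nonneg (t + 1)])]
  nlinarith [sq_nonneg t]

lemma exp_neg_le_lobattoStab {t : ℝ} (ht : 0 ≤ t) : exp (-t) ≤ lobattoStab t := by
  unfold lobattoStab
  rw [exp_neg, inv_eq_one_div, div_le_div_iff₀ (exp_pos t) (by positivity)]
  nlinarith [quadratic_le_exp_of_nonneg ht]

lemma one_add_mul_mul_lobattoStab_pow_le_one (n : ℕ) {t : ℝ} (ht : -1 ≤ t) :
    (1 + n * t) * lobattoStab t ^ n ≤ 1 :=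
  calc (1 + n * t) * lobattoStab t ^ n ≤ (1 + t) ^ n * lobattoStab t ^ n := by
        gcongr
        · exact pow_nonneg (lobattoStab_pos t).le n
        · exact one_add_mul_le_pow (by linarith) n
    _ = ((1 + t) * lobattoStab t) ^ n := (mul_pow _ _ _).symm
    _ ≤ 1 := pow_le_one₀ (mul_nonneg (by linarith) (lobattoStab_pos t).le)
          (one_add_mul_lobattoStab_le_one t)

lemma exp_neg_mul_le_lobattoStab_pow (n : ℕ) {t : ℝ} (ht : 0 ≤ t) :
    exp (-(n * t)) ≤ lobattoStab t ^ n := by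
  rw [← mul_neg, exp_nat_mul]
  exact pow_le_pow_left₀ (exp_pos _).le (exp_neg_le_lobattoStab ht) n

theorem stmt_11 (J : ℕ) (hJ : 2 ≤ J) (s : ℝ) (hs : 0 < s) :
    |((1 + s) * (2 / ((s / J) ^ 2 + 2 * (s / J) + 2)) ^ J - 1) / s| ≤ 0.31 := by
  have hJpos : (0 : ℝ) < J := by exact_mod_cast (by omega : 0 < J)
  have hst : (J : ℝ) * (s / J) = s := mul_div_cancel₀ s hJpos.ne'
  have ht : 0 ≤ s / J := by positivity
  have hupper := one_add_mul_mul_lobattoStab_pow_le_one J (t := s / J) (by linarith)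
  have hexp := exp_neg_mul_le_lobattoStab_pow J ht
  rw [hst] at hupper hexp
  have hlower := (one_sub_mul_le_one_add_mul_exp_neg hs.le).trans
    (mul_le_mul_of_nonneg_left hexp (by linarith))
  change |((1 + s) * lobattoStab (s / J) ^ J - 1) / s| ≤ 0.31
  rw [abs_div, abs_of_pos hs, div_le_iff₀ hs, abs_le]
  constructor <;> norm_num <;> linarith
end
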